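/- arXiv:2105.08114 — 3 statements merged into one kernel-verified Lean document; each statement's English description precedes it below -/
import Mathlib

section
/- The minimum of the Kullback–Leibler divergence Σ_{m=1}^{M} p_m log(M p_m) over all feasible distributions p for the alternative PIR scheme equals (1−L(D−1))·log((1−L(D−1))/N) + L(D−1)·log( L(D−1)/(N(L+1)^{K−1}−N) ) + log(N(L+1)^{K−1}) (with the convention 0·log 0 = 0), and this minimum is attained by q*. -/
open Finset Real

/-- Download cost of option `m` (0-indexed: options `1,…,N` of the paper are `m < N`)
in the symmetric TSC scheme with `N` databases and `K` messages. -/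
noncomputable def tscCost (N m : ℕ) : ℝ := if m < N then (N : ℝ) - 1 else (N : ℝ)

/-- `p` is a feasible query distribution for the symmetric TSC scheme with expected
normalized download cost `D`. -/
def TSCFeasible (N K : ℕ) (D : ℝ) (p : ℕ → ℝ) : Prop :=
  (∀ m ∈ Finset.range (N ^ K), 0 ≤ p m) ∧
  (∑ m ∈ Finset.range (N ^ K), p m = 1) ∧
  (1 / ((N : ℝ) - 1)) * (∑ m ∈ Finset.range (N ^ K), p m * tscCost N m) = D

/-- The optimal distribution `p*` for the symmetric TSC scheme. -/
noncomputable def tscOpt (N K : ℕ) (D : ℝ) (m : ℕ) : ℝ :=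
  if m < N then (1 - ((N : ℝ) - 1) * (D - 1)) / N
  else ((N : ℝ) - 1) * (D - 1) / ((N : ℝ) ^ K - (N : ℝ))

/-- Download cost of option `m` (0-indexed) in the alternative PIR scheme with
message length `L`. -/
noncomputable def altCost (N L m : ℕ) : ℝ := if m < N then (L : ℝ) else (L : ℝ) + 1

/-- `p` is a feasible query distribution for the alternative PIR scheme
(`M = N (L+1)^(K-1)` options) with expected normalized download cost `D`. -/
def AltFeasible (N K L : ℕ) (D : ℝ) (p : ℕ → ℝ) : Prop :=
  (∀ m ∈ Finset.range (N * (L + 1) ^ (K - 1)), 0 ≤ p m) ∧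
  (∑ m ∈ Finset.range (N * (L + 1) ^ (K - 1)), p m = 1) ∧
  (1 / (L : ℝ)) * (∑ m ∈ Finset.range (N * (L + 1) ^ (K - 1)), p m * altCost N L m) = D

/-- The optimal distribution `q*` for the alternative PIR scheme. -/
noncomputable def altOpt (N K L : ℕ) (D : ℝ) (m : ℕ) : ℝ :=
  if m < N then (1 - (L : ℝ) * (D - 1)) / N
  else (L : ℝ) * (D - 1) / ((N : ℝ) * ((L : ℝ) + 1) ^ (K - 1) - (N : ℝ))

/-- Rényi divergence of order `α` (`0 < α`, `α ≠ 1`) of a distribution `p` on `M`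
options from the uniform distribution on those options (natural logarithm). -/
noncomputable def renyiDiv (M : ℕ) (α : ℝ) (p : ℕ → ℝ) : ℝ :=
  (1 / (α - 1)) * Real.log ((M : ℝ) ^ (α - 1) * ∑ m ∈ Finset.range M, p m ^ α)

/-- Kullback–Leibler divergence of a distribution `p` on `M` options from the uniform
distribution on those options (natural logarithm, with `0 · log 0 = 0`). -/
noncomputable def klDivUnif (M : ℕ) (p : ℕ → ℝ) : ℝ :=
  ∑ m ∈ Finset.range M, p m * Real.log ((M : ℝ) * p m)

/-- The maximum of `p` over the `M` options. -/
noncomputable def maxOver (M : ℕ) (hM : M ≠ 0) (p : ℕ → ℝ) : ℝ :=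
  (Finset.range M).sup' (Finset.nonempty_range_iff.mpr hM) p

/-! Feasibility pins down the mass of each block of options: a feasible `p` puts mass
`1 - L(D-1)` on the `N` options of cost `L` and mass `L(D-1)` on the others. With total mass one,
the divergence is `log M + ∑ pₘ log pₘ`, and by Jensen's inequality for `x log x` each block
contributes at least what the uniform distribution of the same mass on that block contributes;
`q*` is uniform on both blocks. It is a distribution because `L ≤ N - 1` and
`D - 1 ≤ ∑_{k ≥ 1} N⁻ᵏ = 1/(N - 1)`. -/

lemma mul_log_mul_of_ne_zero {c : ℝ} (hc : c ≠ 0) (x : ℝ) :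
    x * log (c * x) = x * log c + x * log x := by
  rcases eq_or_ne x 0 with rfl | hx
  · simp
  · rw [log_mul hc hx]; ring

lemma sum_mul_log_const_mul {ι : Type*} (s : Finset ι) (p : ι → ℝ) {c : ℝ} (hc : c ≠ 0) :
    ∑ i ∈ s, p i * log (c * p i) = (∑ i ∈ s, p i) * log c + ∑ i ∈ s, p i * log (p i) := by
  simp only [mul_log_mul_of_ne_zero hc, sum_add_distrib, sum_mul]

lemma sum_mul_log_div_card_le {ι : Type*} (s : Finset ι) {p : ι → ℝ} (hp : ∀ i ∈ s, 0 ≤ p i) :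
    (∑ i ∈ s, p i) * log ((∑ i ∈ s, p i) / #s) ≤ ∑ i ∈ s, p i * log (p i) := by
  rcases s.eq_empty_or_nonempty with rfl | hs
  · simp
  have hn : (0 : ℝ) < #s := by exact_mod_cast hs.card_pos
  have jensen := convexOn_mul_log.map_sum_le (t := s) (w := fun _ ↦ (#s : ℝ)⁻¹) (p := p)
    (fun _ _ ↦ by positivity) (by simp [hn.ne']) hp
  simp only [smul_eq_mul, ← mul_sum] at jensen
  rw [inv_mul_eq_div] at jensen
  have := mul_le_mul_of_nonneg_left jensen hn.le
  rwa [← mul_assoc, mul_div_cancel₀ _ hn.ne', ← mul_assoc, mul_inv_cancel₀ hn.ne', one_mul] at this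

lemma klDivUnif_eq_log_add {M : ℕ} (hM : M ≠ 0) {p : ℕ → ℝ} (hp : ∑ m ∈ range M, p m = 1) :
    klDivUnif M p = log M + ∑ m ∈ range M, p m * log (p m) := by
  rw [klDivUnif, sum_mul_log_const_mul _ _ (Nat.cast_ne_zero.2 hM), hp, one_mul]

lemma sum_range_inv_pow_le {x : ℝ} (hx : 1 < x) (K : ℕ) :
    ∑ k ∈ range K, (x ^ k)⁻¹ ≤ x / (x - 1) := by
  have h := geom_sum_Ico_le_of_lt_one (m := 0) (n := K) (inv_nonneg.2 (by linarith : (0 : ℝ) ≤ x))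
    (inv_lt_one_of_one_lt₀ hx)
  rw [← range_eq_Ico] at h
  simp only [inv_pow, pow_zero] at h
  calc _ ≤ 1 / (1 - x⁻¹) := h
    _ = x / (x - 1) := by field_simp

lemma mul_sub_one_le_one_of_le_sum_inv_pow {x L D : ℝ} {K : ℕ} (hx : 1 < x) (hL : L ≤ x - 1)
    (hD1 : 1 ≤ D) (hD : D ≤ ∑ k ∈ range K, (x ^ k)⁻¹) :
    L * (D - 1) ≤ 1 := by
  have hD' := hD.trans (sum_range_inv_pow_le hx K)
  rw [le_div_iff₀ (by linarith)] at hD'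
  nlinarith

lemma le_mul_succ_pow (N L j : ℕ) : N ≤ N * (L + 1) ^ j :=
  Nat.le_mul_of_pos_right N (by positivity)

lemma cast_mul_succ_pow (N L j : ℕ) :
    ((N * (L + 1) ^ j : ℕ) : ℝ) = N * ((L : ℝ) + 1) ^ j := by
  push_cast; rfl

lemma sub_pos_of_lt_mul_succ_pow {N L j : ℕ} (h : N < N * (L + 1) ^ j) :
    0 < (N : ℝ) * ((L : ℝ) + 1) ^ j - N := by
  rw [← cast_mul_succ_pow, sub_pos]; exact_mod_cast h

section AltScheme

variable {N K L : ℕ} {D : ℝ}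

lemma sum_mul_altCost {M : ℕ} (hNM : N ≤ M) (p : ℕ → ℝ) :
    ∑ m ∈ range M, p m * altCost N L m = L * ∑ m ∈ range M, p m + ∑ m ∈ Ico N M, p m := by
  rw [mul_sum, ← sum_range_add_sum_Ico _ hNM, ← sum_range_add_sum_Ico _ hNM]
  have hlow : ∀ m ∈ range N, p m * altCost N L m = L * p m := fun m hm ↦ by
    rw [altCost, if_pos (mem_range.1 hm), mul_comm]
  have hhigh : ∀ m ∈ Ico N M, p m * altCost N L m = L * p m + p m := fun m hm ↦ by
    rw [altCost, if_neg (not_lt.2 (mem_Ico.1 hm).1)]; ring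
  rw [sum_congr rfl hlow, sum_congr rfl hhigh, sum_add_distrib]
  ring

lemma AltFeasible.sum_Ico {p : ℕ → ℝ} (hp : AltFeasible N K L D p) (hL : L ≠ 0) :
    ∑ m ∈ Ico N (N * (L + 1) ^ (K - 1)), p m = L * (D - 1) := by
  obtain ⟨-, hsum, hcost⟩ := hp
  rw [sum_mul_altCost (le_mul_succ_pow N L _), hsum] at hcost
  have hL' : (L : ℝ) ≠ 0 := Nat.cast_ne_zero.2 hL
  field_simp at hcost
  linarith

lemma AltFeasible.sum_range {p : ℕ → ℝ} (hp : AltFeasible N K L D p) (hL : L ≠ 0) :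
    ∑ m ∈ range N, p m = 1 - L * (D - 1) := by
  rw [← hp.sum_Ico hL, ← hp.2.1, ← sum_range_add_sum_Ico _ (le_mul_succ_pow N L _),
    add_sub_cancel_right]

lemma AltFeasible.klDivUnif_eq {p : ℕ → ℝ} (hp : AltFeasible N K L D p)
    (hNM : N < N * (L + 1) ^ (K - 1)) :
    klDivUnif (N * (L + 1) ^ (K - 1)) p = log (N * ((L : ℝ) + 1) ^ (K - 1)) +
      (∑ m ∈ range N, p m * log (p m) + ∑ m ∈ Ico N (N * (L + 1) ^ (K - 1)), p m * log (p m)) := by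
  rw [klDivUnif_eq_log_add (by omega) hp.2.1, sum_range_add_sum_Ico _ hNM.le, cast_mul_succ_pow]

lemma AltFeasible.le_klDivUnif {p : ℕ → ℝ} (hp : AltFeasible N K L D p) (hL : L ≠ 0)
    (hNM : N < N * (L + 1) ^ (K - 1)) :
    (1 - (L : ℝ) * (D - 1)) * log ((1 - (L : ℝ) * (D - 1)) / N) +
        L * (D - 1) * log (L * (D - 1) / (N * ((L : ℝ) + 1) ^ (K - 1) - N)) +
        log (N * ((L : ℝ) + 1) ^ (K - 1)) ≤
      klDivUnif (N * (L + 1) ^ (K - 1)) p := by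
  have hlow := sum_mul_log_div_card_le (range N) fun m hm ↦
    hp.1 m (mem_range.2 ((mem_range.1 hm).trans hNM))
  have hhigh := sum_mul_log_div_card_le (Ico N (N * (L + 1) ^ (K - 1))) fun m hm ↦
    hp.1 m (mem_range.2 (mem_Ico.1 hm).2)
  rw [hp.sum_range hL, card_range] at hlow
  rw [hp.sum_Ico hL, Nat.card_Ico, Nat.cast_sub hNM.le, cast_mul_succ_pow] at hhigh
  rw [hp.klDivUnif_eq hNM]
  linarith

lemma altOpt_sum_range (g : ℝ → ℝ) :
    ∑ m ∈ range N, g (altOpt N K L D m) = N * g ((1 - L * (D - 1)) / N) := by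
  rw [sum_congr rfl fun m hm ↦ by rw [altOpt, if_pos (mem_range.1 hm)], sum_const, card_range,
    nsmul_eq_mul]

lemma altOpt_sum_Ico (g : ℝ → ℝ) :
    ∑ m ∈ Ico N (N * (L + 1) ^ (K - 1)), g (altOpt N K L D m) =
      (N * ((L : ℝ) + 1) ^ (K - 1) - N) * g (L * (D - 1) / (N * ((L : ℝ) + 1) ^ (K - 1) - N)) := by
  rw [sum_congr rfl fun m hm ↦ by rw [altOpt, if_neg (not_lt.2 (mem_Ico.1 hm).1)], sum_const,
    Nat.card_Ico, nsmul_eq_mul, Nat.cast_sub (le_mul_succ_pow N L _), cast_mul_succ_pow]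

lemma altOpt_feasible (hL : L ≠ 0) (hNM : N < N * (L + 1) ^ (K - 1))
    (h0 : 0 ≤ L * (D - 1)) (h1 : L * (D - 1) ≤ 1) :
    AltFeasible N K L D (altOpt N K L D) := by
  have hN : (0 : ℝ) < N := by
    exact_mod_cast Nat.pos_of_ne_zero (by rintro rfl; simp at hNM)
  have hgap := sub_pos_of_lt_mul_succ_pow hNM
  have hlow : ∑ m ∈ range N, altOpt N K L D m = 1 - L * (D - 1) :=
    (altOpt_sum_range id).trans (mul_div_cancel₀ _ hN.ne')
  have hhigh : ∑ m ∈ Ico N (N * (L + 1) ^ (K - 1)), altOpt N K L D m = L * (D - 1) :=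
    (altOpt_sum_Ico id).trans (mul_div_cancel₀ _ hgap.ne')
  have htotal : ∑ m ∈ range (N * (L + 1) ^ (K - 1)), altOpt N K L D m = 1 := by
    rw [← sum_range_add_sum_Ico _ hNM.le, hlow, hhigh, sub_add_cancel]
  refine ⟨fun m _ ↦ ?_, htotal, ?_⟩
  · unfold altOpt; split_ifs <;> positivity
  · have hL' : (L : ℝ) ≠ 0 := Nat.cast_ne_zero.2 hL
    rw [sum_mul_altCost hNM.le, htotal, hhigh]; field_simp; ring

lemma klDivUnif_altOpt (hL : L ≠ 0) (hNM : N < N * (L + 1) ^ (K - 1))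
    (h0 : 0 ≤ L * (D - 1)) (h1 : L * (D - 1) ≤ 1) :
    klDivUnif (N * (L + 1) ^ (K - 1)) (altOpt N K L D) =
      (1 - (L : ℝ) * (D - 1)) * log ((1 - (L : ℝ) * (D - 1)) / N) +
        L * (D - 1) * log (L * (D - 1) / (N * ((L : ℝ) + 1) ^ (K - 1) - N)) +
        log (N * ((L : ℝ) + 1) ^ (K - 1)) := by
  have hN : (N : ℝ) ≠ 0 := Nat.cast_ne_zero.2 (by rintro rfl; simp at hNM)
  rw [(altOpt_feasible hL hNM h0 h1).klDivUnif_eq hNM, altOpt_sum_range fun x ↦ x * log x,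
    altOpt_sum_Ico fun x ↦ x * log x, ← mul_assoc, mul_div_cancel₀ _ hN, ← mul_assoc,
    mul_div_cancel₀ _ (sub_pos_of_lt_mul_succ_pow hNM).ne']
  ring

end AltScheme

theorem alt_kl_tradeoff_general (N K L : ℕ) (hK : 2 ≤ K)
    (hL1 : 1 ≤ L) (hL2 : L ≤ N - 2) (D : ℝ)
    (hD1 : 1 ≤ D) (hD2 : D ≤ ∑ k ∈ Finset.range K, ((N : ℝ) ^ k)⁻¹) :
    AltFeasible N K L D (altOpt N K L D) ∧
    (∀ p : ℕ → ℝ, AltFeasible N K L D p →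
      (1 - (L : ℝ) * (D - 1)) * Real.log ((1 - (L : ℝ) * (D - 1)) / N) +
        (L : ℝ) * (D - 1) *
          Real.log ((L : ℝ) * (D - 1) / ((N : ℝ) * ((L : ℝ) + 1) ^ (K - 1) - N)) +
        Real.log ((N : ℝ) * ((L : ℝ) + 1) ^ (K - 1)) ≤
        klDivUnif (N * (L + 1) ^ (K - 1)) p) ∧
    klDivUnif (N * (L + 1) ^ (K - 1)) (altOpt N K L D) =
      (1 - (L : ℝ) * (D - 1)) * Real.log ((1 - (L : ℝ) * (D - 1)) / N) +
        (L : ℝ) * (D - 1) *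
          Real.log ((L : ℝ) * (D - 1) / ((N : ℝ) * ((L : ℝ) + 1) ^ (K - 1) - N)) +
        Real.log ((N : ℝ) * ((L : ℝ) + 1) ^ (K - 1)) := by
  have hL : L ≠ 0 := by omega
  have hNM : N < N * (L + 1) ^ (K - 1) :=
    lt_mul_of_one_lt_right (by omega) (Nat.one_lt_pow (by omega) (by omega))
  have h0 : 0 ≤ (L : ℝ) * (D - 1) := mul_nonneg L.cast_nonneg (sub_nonneg.2 hD1)
  have h1 : (L : ℝ) * (D - 1) ≤ 1 := by
    refine mul_sub_one_le_one_of_le_sum_inv_pow (by exact_mod_cast (by omega : 1 < N)) ?_ hD1 hD2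
    rw [le_sub_iff_add_le]; exact_mod_cast (by omega : L + 1 ≤ N)
  exact ⟨altOpt_feasible hL hNM h0 h1, fun p hp ↦ hp.le_klDivUnif hL hNM,
    klDivUnif_altOpt hL hNM h0 h1⟩

/-- the minimum of the KL divergence `∑ pₘ log (M pₘ)` over feasible
distributions of the alternative PIR scheme equals
`(1-L(D-1)) log((1-L(D-1))/N) + L(D-1) log(L(D-1)/(N(L+1)^(K-1)-N)) + log(N(L+1)^(K-1))`,
attained by `q*`. -/
theorem alt_kl_tradeoff (N K L : ℕ) (hN : 3 ≤ N) (hK : 2 ≤ K)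
    (hL1 : 1 ≤ L) (hL2 : L ≤ N - 2) (D : ℝ)
    (hD1 : 1 ≤ D) (hD2 : D ≤ ∑ k ∈ Finset.range K, ((N : ℝ) ^ k)⁻¹) :
    AltFeasible N K L D (altOpt N K L D) ∧
    (∀ p : ℕ → ℝ, AltFeasible N K L D p →
      (1 - (L : ℝ) * (D - 1)) * Real.log ((1 - (L : ℝ) * (D - 1)) / N) +
        (L : ℝ) * (D - 1) *
          Real.log ((L : ℝ) * (D - 1) / ((N : ℝ) * ((L : ℝ) + 1) ^ (K - 1) - N)) +
        Real.log ((N : ℝ) * ((L : ℝ) + 1) ^ (K - 1)) ≤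
        klDivUnif (N * (L + 1) ^ (K - 1)) p) ∧
    klDivUnif (N * (L + 1) ^ (K - 1)) (altOpt N K L D) =
      (1 - (L : ℝ) * (D - 1)) * Real.log ((1 - (L : ℝ) * (D - 1)) / N) +
        (L : ℝ) * (D - 1) *
          Real.log ((L : ℝ) * (D - 1) / ((N : ℝ) * ((L : ℝ) + 1) ^ (K - 1) - N)) +
        Real.log ((N : ℝ) * ((L : ℝ) + 1) ^ (K - 1)) :=
  alt_kl_tradeoff_general N K L hK hL1 hL2 D hD1 hD2
end

section
/- The uniform distribution p_m = 1/M on the M = N(L+1)^{K−1} options of the alternative PIR scheme has expected normalized download cost (1/L) Σ_{m=1}^{M} (1/M) d_m = 1 + (1 − (L+1)^{1−K})/L, and this value is strictly greater than Σ_{k=0}^{K-1} N^{-k}; hence the alternative scheme with perfect privacy cannot achieve the PIR capacity. -/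
open Finset Real

/-! Under the uniform distribution the expected cost is an explicit rational function of `L`,
and summing the geometric series shows that it equals `∑_{k<K} (L+1)^{-k}`. Since `L + 1 < N`
and `K ≥ 2`, this sum dominates the capacity term `∑_{k<K} N^{-k}` strictly, term `k = 1`
being strictly larger. -/

lemma sum_range_altCost {N M : ℕ} (L : ℕ) (hNM : N ≤ M) :
    ∑ m ∈ Finset.range M, altCost N L m = (M : ℝ) * ((L : ℝ) + 1) - N := by
  rw [← Finset.sum_range_add_sum_Ico _ hNM]
  have hcheap : ∀ m ∈ Finset.range N, altCost N L m = L := fun m hm => by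
    simp only [altCost, if_pos (Finset.mem_range.mp hm)]
  have hdear : ∀ m ∈ Finset.Ico N M, altCost N L m = (L : ℝ) + 1 := fun m hm => by
    simp only [altCost, if_neg (Nat.not_lt.mpr (Finset.mem_Ico.mp hm).1)]
  rw [Finset.sum_congr rfl hcheap, Finset.sum_congr rfl hdear, Finset.sum_const,
    Finset.sum_const, Finset.card_range, Nat.card_Ico, nsmul_eq_mul, nsmul_eq_mul,
    Nat.cast_sub hNM]
  ring

lemma uniform_expected_altCost {N K L : ℕ} (hN : 0 < N) (hK : 1 ≤ K) (hL : L ≠ 0) :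
    (1 / (L : ℝ)) * (∑ m ∈ Finset.range (N * (L + 1) ^ (K - 1)),
        (1 / ((N : ℝ) * ((L : ℝ) + 1) ^ (K - 1))) * altCost N L m) =
      1 + (1 - ((L : ℝ) + 1) ^ ((1 : ℤ) - (K : ℤ))) / L := by
  have hNM : N ≤ N * (L + 1) ^ (K - 1) := Nat.le_mul_of_pos_right _ (by positivity)
  have hx : (L : ℝ) + 1 ≠ 0 := by positivity
  obtain ⟨j, rfl⟩ := Nat.exists_eq_add_of_le' hK
  rw [← Finset.mul_sum, sum_range_altCost L hNM, zpow_one_sub_natCast₀ hx]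
  push_cast
  simp only [pow_succ]
  field_simp
  ring

lemma sum_range_inv_pow_eq {a : ℝ} (ha : a ≠ 0) (ha1 : a + 1 ≠ 0) (K : ℕ) :
    ∑ k ∈ Finset.range K, ((a + 1) ^ k)⁻¹ = 1 + (1 - (a + 1) ^ ((1 : ℤ) - (K : ℤ))) / a := by
  have hr : (a + 1)⁻¹ ≠ 1 := by
    rw [Ne, inv_eq_one]
    exact fun h => ha (by linarith)
  simp_rw [← inv_pow]
  have hden : (a + 1)⁻¹ - 1 = -a / (a + 1) := by field_simp; ring
  rw [geom_sum_eq hr, hden, zpow_one_sub_natCast₀ ha1, inv_pow]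
  field_simp
  ring

lemma sum_range_inv_pow_lt_of_lt {a b : ℝ} (ha : 0 < a) (hab : a < b) {K : ℕ} (hK : 2 ≤ K) :
    ∑ k ∈ Finset.range K, (b ^ k)⁻¹ < ∑ k ∈ Finset.range K, (a ^ k)⁻¹ := by
  refine Finset.sum_lt_sum (fun k _ => ?_) ⟨1, Finset.mem_range.mpr hK, ?_⟩
  · exact inv_anti₀ (by positivity) (pow_le_pow_left₀ ha.le hab.le k)
  · simpa only [pow_one] using inv_strictAnti₀ ha hab

theorem alt_uniform_cost_general (N K L : ℕ) (hK : 2 ≤ K)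
    (hL1 : 1 ≤ L) (hL2 : L ≤ N - 2) :
    (1 / (L : ℝ)) * (∑ m ∈ Finset.range (N * (L + 1) ^ (K - 1)),
        (1 / ((N : ℝ) * ((L : ℝ) + 1) ^ (K - 1))) * altCost N L m) =
      1 + (1 - ((L : ℝ) + 1) ^ ((1 : ℤ) - (K : ℤ))) / L ∧
    (∑ k ∈ Finset.range K, ((N : ℝ) ^ k)⁻¹) <
      1 + (1 - ((L : ℝ) + 1) ^ ((1 : ℤ) - (K : ℤ))) / L := by
  have hLN : (L : ℝ) + 1 < N := by exact_mod_cast (show L + 1 < N by omega)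
  have hL : (0 : ℝ) < L := by exact_mod_cast hL1
  refine ⟨uniform_expected_altCost (by omega) (by omega) (by omega), ?_⟩
  rw [← sum_range_inv_pow_eq hL.ne' (by positivity)]
  exact sum_range_inv_pow_lt_of_lt (by positivity) hLN hK

/-- the uniform distribution on the `M = N(L+1)^(K-1)` options of the
alternative PIR scheme has expected normalized download cost `1 + (1-(L+1)^(1-K))/L`,
which is strictly greater than the reciprocal `∑_{k<K} N^{-k}` of the PIR capacity;
hence the alternative scheme with perfect privacy cannot achieve the PIR capacity. -/
theorem alt_uniform_cost (N K L : ℕ) (hN : 3 ≤ N) (hK : 2 ≤ K)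
    (hL1 : 1 ≤ L) (hL2 : L ≤ N - 2) :
    (1 / (L : ℝ)) * (∑ m ∈ Finset.range (N * (L + 1) ^ (K - 1)),
        (1 / ((N : ℝ) * ((L : ℝ) + 1) ^ (K - 1))) * altCost N L m) =
      1 + (1 - ((L : ℝ) + 1) ^ ((1 : ℤ) - (K : ℤ))) / L ∧
    (∑ k ∈ Finset.range K, ((N : ℝ) ^ k)⁻¹) <
      1 + (1 - ((L : ℝ) + 1) ^ ((1 : ℤ) - (K : ℤ))) / L :=
  alt_uniform_cost_general N K L hK hL1 hL2
end

section
/- At download cost D = 1, the minimal information leakage of the alternative PIR scheme is strictly smaller than that of the symmetric TSC scheme: for every α ∈ (0,∞) with α ≠ 1, the minimum over feasible distributions of the alternative scheme of D_α(p‖U_alt) equals (K−1)·log(L+1), the minimum over feasible distributions of the symmetric TSC scheme of D_α(p‖U_TSC) equals (K−1)·log N, and (K−1)·log(L+1) < (K−1)·log N. -/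
open Finset Real

/-!
At cost `D = 1` every feasible distribution must put all of its mass on the `n = N` cheapest
options, since any mass on a dearer option raises the expected cost above the minimum. For a
distribution supported on the first `n` of `M` options the Rényi divergence from uniform splits
as `log M - log n` plus the divergence from uniform on those `n` options, which is nonnegative
by Jensen's inequality for `x ↦ x ^ α` and vanishes for the uniform distribution on them. So
both minima equal `log (M / N)`.
-/

namespace PIRLeakage

lemma sum_range_eq_of_le {β : Type*} [AddCommMonoid β] {n M : ℕ} (hnM : n ≤ M) {f : ℕ → β}
    (hf : ∀ m ∈ range M, n ≤ m → f m = 0) :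
    ∑ m ∈ range M, f m = ∑ m ∈ range n, f m :=
  (sum_subset (range_subset_range.2 hnM) fun m hm hmn => hf m hm (by simpa using hmn)).symm

section Jensen

variable {ι : Type*} {s : Finset ι} {p : ι → ℝ}

lemma sum_rpow_pos (hp0 : ∀ i ∈ s, 0 ≤ p i) (hp1 : ∑ i ∈ s, p i = 1) (α : ℝ) :
    0 < ∑ i ∈ s, p i ^ α := by
  obtain ⟨i, hi, hpi⟩ := exists_ne_zero_of_sum_ne_zero (hp1 ▸ one_ne_zero)
  exact sum_pos' (fun j hj => rpow_nonneg (hp0 j hj) α)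
    ⟨i, hi, rpow_pos_of_pos ((hp0 i hi).lt_of_ne' hpi) α⟩

lemma card_rpow_eq_card_mul_inv_rpow (hs : s.Nonempty) (α : ℝ) :
    (#s : ℝ) ^ (1 - α) = #s * (#s : ℝ)⁻¹ ^ α := by
  have hn : (0 : ℝ) < #s := by exact_mod_cast hs.card_pos
  rw [rpow_sub hn, rpow_one, inv_rpow hn.le, div_eq_mul_inv]

lemma sum_inv_card (hs : s.Nonempty) : ∑ _i ∈ s, (#s : ℝ)⁻¹ = 1 := by
  rw [sum_const, nsmul_eq_mul, mul_inv_cancel₀ (by exact_mod_cast hs.card_pos.ne')]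

lemma card_rpow_one_sub_le_sum_rpow (hs : s.Nonempty) (hp0 : ∀ i ∈ s, 0 ≤ p i)
    (hp1 : ∑ i ∈ s, p i = 1) {α : ℝ} (hα : 1 ≤ α) :
    (#s : ℝ) ^ (1 - α) ≤ ∑ i ∈ s, p i ^ α := by
  have hn : (0 : ℝ) < #s := by exact_mod_cast hs.card_pos
  have hJensen := (convexOn_rpow hα).map_sum_le (fun _ _ => inv_nonneg.2 hn.le) (sum_inv_card hs) hp0
  simp only [smul_eq_mul, ← mul_sum, hp1, mul_one] at hJensen
  calc (#s : ℝ) ^ (1 - α) = #s * (#s : ℝ)⁻¹ ^ α := card_rpow_eq_card_mul_inv_rpow hs α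
    _ ≤ #s * ((#s : ℝ)⁻¹ * ∑ i ∈ s, p i ^ α) := by gcongr
    _ = ∑ i ∈ s, p i ^ α := by field_simp

lemma sum_rpow_le_card_rpow_one_sub (hs : s.Nonempty) (hp0 : ∀ i ∈ s, 0 ≤ p i)
    (hp1 : ∑ i ∈ s, p i = 1) {α : ℝ} (hα0 : 0 ≤ α) (hα1 : α ≤ 1) :
    ∑ i ∈ s, p i ^ α ≤ (#s : ℝ) ^ (1 - α) := by
  have hn : (0 : ℝ) < #s := by exact_mod_cast hs.card_pos
  have hJensen :=
    (concaveOn_rpow hα0 hα1).le_map_sum (fun _ _ => inv_nonneg.2 hn.le) (sum_inv_card hs) hp0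
  simp only [smul_eq_mul, ← mul_sum, hp1, mul_one] at hJensen
  calc ∑ i ∈ s, p i ^ α = #s * ((#s : ℝ)⁻¹ * ∑ i ∈ s, p i ^ α) := by field_simp
    _ ≤ #s * (#s : ℝ)⁻¹ ^ α := by gcongr
    _ = (#s : ℝ) ^ (1 - α) := (card_rpow_eq_card_mul_inv_rpow hs α).symm

end Jensen

lemma renyiDiv_nonneg {n : ℕ} (hn : 0 < n) {p : ℕ → ℝ} (hp0 : ∀ m ∈ range n, 0 ≤ p m)
    (hp1 : ∑ m ∈ range n, p m = 1) {α : ℝ} (hα0 : 0 ≤ α) :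
    0 ≤ renyiDiv n α p := by
  have hne : (range n).Nonempty := nonempty_range_iff.2 hn.ne'
  have hn' : (0 : ℝ) < n := by exact_mod_cast hn
  have hS := sum_rpow_pos hp0 hp1 α
  have hcancel : (n : ℝ) ^ (α - 1) * (n : ℝ) ^ (1 - α) = 1 := by
    rw [← rpow_add hn', sub_add_sub_cancel', sub_self, rpow_zero]
  rw [renyiDiv]
  rcases lt_or_ge α 1 with hlt | hge
  · have hsum := sum_rpow_le_card_rpow_one_sub hne hp0 hp1 hα0 hlt.le
    rw [card_range] at hsum
    refine mul_nonneg_of_nonpos_of_nonpos (one_div_nonpos.2 (by linarith)) (log_nonpos ?_ ?_)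
    · positivity
    · calc (n : ℝ) ^ (α - 1) * ∑ m ∈ range n, p m ^ α ≤ (n : ℝ) ^ (α - 1) * (n : ℝ) ^ (1 - α) := by
            gcongr
        _ = 1 := hcancel
  · have hsum := card_rpow_one_sub_le_sum_rpow hne hp0 hp1 hge
    rw [card_range] at hsum
    refine mul_nonneg (one_div_nonneg.2 (by linarith)) (log_nonneg ?_)
    calc 1 = (n : ℝ) ^ (α - 1) * (n : ℝ) ^ (1 - α) := hcancel.symm
      _ ≤ (n : ℝ) ^ (α - 1) * ∑ m ∈ range n, p m ^ α := by gcongr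

lemma renyiDiv_eq_add_of_le {n M : ℕ} (hn : 0 < n) (hnM : n ≤ M) {α : ℝ} (hα0 : 0 < α)
    (hα1 : α ≠ 1) {p : ℕ → ℝ} (hsupp : ∀ m ∈ range M, n ≤ m → p m = 0)
    (hS : 0 < ∑ m ∈ range n, p m ^ α) :
    renyiDiv M α p = renyiDiv n α p + (log M - log n) := by
  have hn' : (0 : ℝ) < n := by exact_mod_cast hn
  have hM' : (0 : ℝ) < M := by exact_mod_cast hn.trans_le hnM
  have hα : α - 1 ≠ 0 := sub_ne_zero.2 hα1
  rw [renyiDiv, renyiDiv,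
    sum_range_eq_of_le hnM fun m hm hnm => by rw [hsupp m hm hnm, zero_rpow hα0.ne'],
    log_mul (by positivity) hS.ne', log_mul (by positivity) hS.ne', log_rpow hM', log_rpow hn']
  field_simp
  ring

noncomputable def prefixUniform (n m : ℕ) : ℝ := if m < n then (n : ℝ)⁻¹ else 0

lemma prefixUniform_of_lt {n m : ℕ} (h : m < n) : prefixUniform n m = (n : ℝ)⁻¹ := if_pos h

lemma prefixUniform_of_le {n m : ℕ} (h : n ≤ m) : prefixUniform n m = 0 := if_neg (not_lt.2 h)

lemma renyiDiv_prefixUniform_self (n : ℕ) (α : ℝ) : renyiDiv n α (prefixUniform n) = 0 := by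
  rcases n.eq_zero_or_pos with rfl | hn
  · simp [renyiDiv]
  have hn' : (0 : ℝ) < n := by exact_mod_cast hn
  have hsum : ∑ m ∈ range n, prefixUniform n m ^ α = n * (n : ℝ)⁻¹ ^ α := by
    rw [sum_congr rfl fun m hm => by rw [prefixUniform_of_lt (mem_range.1 hm)], sum_const,
      card_range, nsmul_eq_mul]
  rw [renyiDiv, hsum, inv_rpow hn'.le, ← mul_assoc, ← rpow_add_one hn'.ne', sub_add_cancel,
    mul_inv_cancel₀ (rpow_pos_of_pos hn' α).ne', log_one, mul_zero]

/-- Common shape of `TSCFeasible` (`c = N - 1`, `cost = tscCost N`) and `AltFeasible`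
(`c = L`, `cost = altCost N L`); both unfold to it definitionally. -/
def CostFeasible (M : ℕ) (c D : ℝ) (cost p : ℕ → ℝ) : Prop :=
  (∀ m ∈ range M, 0 ≤ p m) ∧ (∑ m ∈ range M, p m = 1) ∧
    (1 / c) * (∑ m ∈ range M, p m * cost m) = D

section CostFeasible

variable {n M : ℕ} {c : ℝ} {cost p : ℕ → ℝ}

lemma costFeasible_prefixUniform (hn : 0 < n) (hnM : n ≤ M) (hc : c ≠ 0)
    (hcheap : ∀ m < n, cost m = c) : CostFeasible M c 1 cost (prefixUniform n) := by
  have hn' : (n : ℝ) ≠ 0 := by exact_mod_cast hn.ne'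
  have hvanish : ∀ m ∈ range M, n ≤ m → prefixUniform n m = 0 :=
    fun _ _ hnm => prefixUniform_of_le hnm
  refine ⟨fun m _ => ?_, ?_, ?_⟩
  · unfold prefixUniform
    split_ifs <;> positivity
  · rw [sum_range_eq_of_le hnM hvanish,
      sum_congr rfl fun m hm => prefixUniform_of_lt (mem_range.1 hm),
      sum_const, card_range, nsmul_eq_mul, mul_inv_cancel₀ hn']
  · rw [sum_range_eq_of_le hnM fun m hm hnm => by rw [hvanish m hm hnm, zero_mul],
      sum_congr rfl fun m hm => by
        rw [prefixUniform_of_lt (mem_range.1 hm), hcheap m (mem_range.1 hm)],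
      sum_const, card_range, nsmul_eq_mul]
    field_simp

lemma CostFeasible.eq_zero_of_le (hp : CostFeasible M c 1 cost p) (hc : 0 < c)
    (hcheap : ∀ m < n, cost m = c) (hdear : ∀ m, n ≤ m → c < cost m) :
    ∀ m ∈ range M, n ≤ m → p m = 0 := by
  obtain ⟨hp0, hp1, hD⟩ := hp
  have hexcess : ∑ m ∈ range M, p m * (cost m - c) = 0 := by
    simp only [mul_sub, sum_sub_distrib, ← sum_mul, hp1, one_mul]
    field_simp at hD
    linarith
  have hcost : ∀ m, c ≤ cost m := fun m =>
    (lt_or_ge m n).elim (fun h => (hcheap m h).ge) fun h => (hdear m h).le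
  intro m hm hnm
  have hterm := (sum_eq_zero_iff_of_nonneg fun k hk =>
    mul_nonneg (hp0 k hk) (sub_nonneg.2 (hcost k))).1 hexcess m hm
  exact (mul_eq_zero.1 hterm).resolve_right (sub_ne_zero.2 (hdear m hnm).ne')

theorem isLeast_renyiDiv_costFeasible (hn : 0 < n) (hnM : n ≤ M) (hc : 0 < c)
    (hcheap : ∀ m < n, cost m = c) (hdear : ∀ m, n ≤ m → c < cost m) {α : ℝ} (hα0 : 0 < α)
    (hα1 : α ≠ 1) :
    IsLeast {v | ∃ p, CostFeasible M c 1 cost p ∧ v = renyiDiv M α p} (log M - log n) := by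
  have hsplit : ∀ p, CostFeasible M c 1 cost p →
      renyiDiv M α p = renyiDiv n α p + (log M - log n) ∧ 0 ≤ renyiDiv n α p := by
    intro p hp
    have hsupp := hp.eq_zero_of_le hc hcheap hdear
    have hp0 : ∀ m ∈ range n, 0 ≤ p m :=
      fun m hm => hp.1 m (range_subset_range.2 hnM hm)
    have hp1 : ∑ m ∈ range n, p m = 1 := (sum_range_eq_of_le hnM hsupp).symm.trans hp.2.1
    exact ⟨renyiDiv_eq_add_of_le hn hnM hα0 hα1 hsupp (sum_rpow_pos hp0 hp1 α),
      renyiDiv_nonneg hn hp0 hp1 hα0.le⟩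
  have hunif := costFeasible_prefixUniform hn hnM hc.ne' hcheap
  refine ⟨⟨prefixUniform n, hunif, ?_⟩, ?_⟩
  · rw [(hsplit _ hunif).1, renyiDiv_prefixUniform_self, zero_add]
  · rintro v ⟨p, hp, rfl⟩
    obtain ⟨heq, hnonneg⟩ := hsplit p hp
    linarith

end CostFeasible

end PIRLeakage

open PIRLeakage in
theorem alt_beats_tsc_at_D_one_general (N K L : ℕ) (hK : 2 ≤ K)
    (hL1 : 1 ≤ L) (hL2 : L ≤ N - 2)
    (α : ℝ) (hα0 : 0 < α) (hα1 : α ≠ 1) :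
    IsLeast
      {v : ℝ | ∃ p : ℕ → ℝ, AltFeasible N K L 1 p ∧
        v = renyiDiv (N * (L + 1) ^ (K - 1)) α p}
      (((K : ℝ) - 1) * Real.log ((L : ℝ) + 1)) ∧
    IsLeast
      {v : ℝ | ∃ p : ℕ → ℝ, TSCFeasible N K 1 p ∧ v = renyiDiv (N ^ K) α p}
      (((K : ℝ) - 1) * Real.log N) ∧
    ((K : ℝ) - 1) * Real.log ((L : ℝ) + 1) < ((K : ℝ) - 1) * Real.log N := by
  have hN : 0 < N := by omega
  have hN' : (N : ℝ) ≠ 0 := by positivity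
  have hK1 : ((K - 1 : ℕ) : ℝ) = K - 1 := by rw [Nat.cast_sub (by omega), Nat.cast_one]
  have hAlt : ((K : ℝ) - 1) * log ((L : ℝ) + 1) = log ↑(N * (L + 1) ^ (K - 1)) - log N := by
    push_cast
    rw [log_mul hN' (by positivity), log_pow, hK1]
    ring
  have hTSC : ((K : ℝ) - 1) * log N = log ↑(N ^ K) - log N := by
    rw [Nat.cast_pow, log_pow]
    ring
  refine ⟨hAlt ▸ ?_, hTSC ▸ ?_, ?_⟩
  · exact isLeast_renyiDiv_costFeasible hN (Nat.le_mul_of_pos_right N (by positivity))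
      (by exact_mod_cast hL1) (fun m hm => if_pos hm)
      (fun m hm => by simp [not_lt.2 hm]) hα0 hα1
  · exact isLeast_renyiDiv_costFeasible hN (Nat.le_self_pow (by omega) N)
      (by rw [sub_pos, Nat.one_lt_cast]; omega) (fun m hm => if_pos hm)
      (fun m hm => by simp [not_lt.2 hm]) hα0 hα1
  · have hLN : (L : ℝ) + 1 < N := by exact_mod_cast (by omega : L + 1 < N)
    have hK' : (0 : ℝ) < K - 1 := by rw [sub_pos, Nat.one_lt_cast]; omega
    exact mul_lt_mul_of_pos_left (log_lt_log (by positivity) hLN) hK'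

/-- at download cost `D = 1`, for every order `α ∈ (0,∞)`, `α ≠ 1`, the
minimal Rényi divergence of the alternative PIR scheme equals `(K-1) log(L+1)`, that of
the symmetric TSC scheme equals `(K-1) log N`, and `(K-1) log(L+1) < (K-1) log N`. -/
theorem alt_beats_tsc_at_D_one (N K L : ℕ) (hN : 3 ≤ N) (hK : 2 ≤ K)
    (hL1 : 1 ≤ L) (hL2 : L ≤ N - 2)
    (α : ℝ) (hα0 : 0 < α) (hα1 : α ≠ 1) :
    IsLeast
      {v : ℝ | ∃ p : ℕ → ℝ, AltFeasible N K L 1 p ∧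
        v = renyiDiv (N * (L + 1) ^ (K - 1)) α p}
      (((K : ℝ) - 1) * Real.log ((L : ℝ) + 1)) ∧
    IsLeast
      {v : ℝ | ∃ p : ℕ → ℝ, TSCFeasible N K 1 p ∧ v = renyiDiv (N ^ K) α p}
      (((K : ℝ) - 1) * Real.log N) ∧
    ((K : ℝ) - 1) * Real.log ((L : ℝ) + 1) < ((K : ℝ) - 1) * Real.log N :=
  alt_beats_tsc_at_D_one_general N K L hK hL1 hL2 α hα0 hα1
end
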